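/- arXiv:2505.13865 — 2 statements merged into one kernel-verified Lean document; each statement's English description precedes it below -/
import Mathlib

section
/- A linear order on the edge set of a finite acyclic directed graph is an upward planar order in the sense of conditions (U₁), (U₂), (U₃) if and only if it satisfies (Q₁) and the nesting condition (Q₂). -/
structure Digraph' (V E : Type) where
  s : E → V
  t : E → V

def conv {E : Type} [LinearOrder E] (X : Set E) : Set E :=
  {y | ∃ a ∈ X, ∃ b ∈ X, a ≤ y ∧ y ≤ b}

namespace Digraph'

variable {V E : Type} (G : Digraph' V E)

/-- One edge can be followed by another. -/
def step (e f : E) : Prop := G.t e = G.s f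

/-- The reachable order: a directed path starts with `e₁` and ends with `e₂`
(including the case `e₁ = e₂`). -/
def reach : E → E → Prop := Relation.ReflTransGen G.step

/-- No directed cycles. -/
def Acyclic : Prop := ∀ e, ¬ Relation.TransGen G.step e e

/-- Incoming edges of a vertex. -/
def I (v : V) : Set E := {e | G.t e = v}

/-- Outgoing edges of a vertex. -/
def O (v : V) : Set E := {e | G.s e = v}

/-- All edges incident to a vertex `v` (incoming or outgoing). -/
def Ev (v : V) : Set E := G.I v ∪ G.O v

variable [LinearOrder E]

/-- (U₁): reachability implies order. -/
def U1 : Prop := ∀ e₁ e₂ : E, G.reach e₁ e₂ → e₁ ≤ e₂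

/-- (U₂): for every vertex, the hulls of incoming and outgoing edges are disjoint and
together give the hull of all incident edges. -/
def U2 : Prop := ∀ v : V,
  conv (G.I v) ∩ conv (G.O v) = ∅ ∧ conv (G.Ev v) = conv (G.I v) ∪ conv (G.O v)

/-- (U₃). -/
def U3 : Prop := ∀ v₁ v₂ : V,
  ((G.I v₁ ∩ conv (G.I v₂)).Nonempty → conv (G.I v₁) ⊆ conv (G.I v₂)) ∧
  ((G.O v₁ ∩ conv (G.O v₂)).Nonempty → conv (G.O v₁) ⊆ conv (G.O v₂))

/-- (Q₂), the nesting condition. -/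
def Q2 : Prop := ∀ e₁ e e₂ : E, e₁ < e → e < e₂ →
  (G.t e₁ = G.t e₂ → G.I (G.t e) ⊆ conv (G.I (G.t e₁))) ∧
  (G.s e₁ = G.s e₂ → G.O (G.s e) ⊆ conv (G.O (G.s e₁))) ∧
  (G.t e₁ = G.s e₂ →
    G.I (G.t e) ⊆ conv (G.I (G.t e₁)) ∨ G.O (G.s e) ⊆ conv (G.O (G.s e₂)))

end Digraph'

/-!
(U₃) says exactly that the hull of each fibre of `t` (resp. `s`) contains the whole fibre of
each of its members; the first two clauses of (Q₂) say this for members strictly inside the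
hull, and members at its ends are trivial. (Q₁) and acyclicity put every incoming edge of a
vertex strictly before every outgoing one, which gives the disjointness in (U₂), and the third
clause of (Q₂) splits the hull of all edges at a vertex into the incoming and outgoing hulls.
-/

section conv

variable {E : Type} [LinearOrder E] {X Y : Set E}

lemma subset_conv (X : Set E) : X ⊆ conv X :=
  fun x hx => ⟨x, hx, x, hx, le_rfl, le_rfl⟩

lemma conv_subset_conv_iff : conv X ⊆ conv Y ↔ X ⊆ conv Y := by
  refine ⟨(subset_conv X).trans, ?_⟩
  rintro h x ⟨a, ha, b, hb, hax, hxb⟩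
  obtain ⟨a', ha', -, -, ha'a, -⟩ := h ha
  obtain ⟨-, -, b', hb', -, hbb'⟩ := h hb
  exact ⟨a', ha', b', hb', ha'a.trans hax, hxb.trans hbb'⟩

lemma conv_mono (h : X ⊆ Y) : conv X ⊆ conv Y :=
  conv_subset_conv_iff.2 (h.trans (subset_conv Y))

def HullsSaturated {V : Type} (f : E → V) : Prop :=
  ∀ v e, e ∈ conv {x | f x = v} → {x | f x = f e} ⊆ conv {x | f x = v}

variable {V : Type} {f : E → V}

lemma hullsSaturated_iff : HullsSaturated f ↔ ∀ v₁ v₂,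
    ({x | f x = v₁} ∩ conv {x | f x = v₂}).Nonempty →
      conv {x | f x = v₁} ⊆ conv {x | f x = v₂} := by
  simp only [conv_subset_conv_iff]
  constructor
  · rintro h v₁ v₂ ⟨e, rfl, he⟩
    exact h v₂ e he
  · exact fun h v e he => h (f e) v ⟨e, rfl, he⟩

lemma hullsSaturated_of_lt (h : ∀ e₁ e e₂, e₁ < e → e < e₂ → f e₁ = f e₂ →
    {x | f x = f e} ⊆ conv {x | f x = f e₁}) : HullsSaturated f := by
  rintro v e ⟨a, rfl, b, hb, hae, heb⟩
  rcases hae.eq_or_lt with rfl | hae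
  · exact subset_conv _
  rcases heb.eq_or_lt with rfl | heb
  · rw [hb]
    exact subset_conv _
  exact h a e b hae heb hb.symm

lemma HullsSaturated.fiber_subset_conv (h : HullsSaturated f) {e₁ e e₂ : E}
    (h₁ : e₁ ≤ e) (h₂ : e ≤ e₂) (hf : f e₁ = f e₂) :
    {x | f x = f e} ⊆ conv {x | f x = f e₁} :=
  h _ e ⟨e₁, rfl, e₂, hf.symm, h₁, h₂⟩

end conv

namespace Digraph'

variable {V E : Type} [LinearOrder E] {G : Digraph' V E}

lemma U3_iff_hullsSaturated : G.U3 ↔ HullsSaturated G.t ∧ HullsSaturated G.s := by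
  simp only [U3, forall_and, hullsSaturated_iff]
  rfl

lemma Q2.hullsSaturated_t (hq : G.Q2) : HullsSaturated G.t :=
  hullsSaturated_of_lt fun e₁ e e₂ h₁ h₂ => (hq e₁ e e₂ h₁ h₂).1

lemma Q2.hullsSaturated_s (hq : G.Q2) : HullsSaturated G.s :=
  hullsSaturated_of_lt fun e₁ e e₂ h₁ h₂ => (hq e₁ e e₂ h₁ h₂).2.1

lemma lt_of_mem_I_of_mem_O (hG : G.Acyclic) (h1 : G.U1) {v : V} {a b : E}
    (ha : a ∈ G.I v) (hb : b ∈ G.O v) : a < b := by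
  have hstep : G.step a b := ha.trans hb.symm
  refine (h1 a b (.single hstep)).lt_of_ne ?_
  rintro rfl
  exact hG a (.single hstep)

lemma conv_I_inter_conv_O_eq_empty (hG : G.Acyclic) (h1 : G.U1) (v : V) :
    conv (G.I v) ∩ conv (G.O v) = ∅ := by
  refine Set.eq_empty_of_forall_notMem ?_
  rintro x ⟨⟨-, -, b, hb, -, hxb⟩, ⟨c, hc, -, -, hcx, -⟩⟩
  exact (lt_of_mem_I_of_mem_O hG h1 hb hc).not_ge (hcx.trans hxb)

lemma Q2.mem_conv_I_or_mem_conv_O (hq : G.Q2) {v : V} {a e b : E}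
    (ha : a ∈ G.I v) (hb : b ∈ G.O v) (hae : a ≤ e) (heb : e ≤ b) :
    e ∈ conv (G.I v) ∨ e ∈ conv (G.O v) := by
  rcases hae.eq_or_lt with rfl | hae
  · exact .inl (subset_conv _ ha)
  rcases heb.eq_or_lt with rfl | heb
  · exact .inr (subset_conv _ hb)
  subst ha
  rcases (hq a e b hae heb).2.2 hb.symm with h | h
  · exact .inl (h rfl)
  · rw [← hb]
    exact .inr (h rfl)

lemma conv_Ev_eq_union (hG : G.Acyclic) (h1 : G.U1) (hq : G.Q2) (v : V) :
    conv (G.Ev v) = conv (G.I v) ∪ conv (G.O v) := by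
  refine (Set.union_subset (conv_mono Set.subset_union_left)
    (conv_mono Set.subset_union_right)).antisymm' ?_
  rintro x ⟨a, ha | ha, b, hb | hb, hax, hxb⟩
  · exact .inl ⟨a, ha, b, hb, hax, hxb⟩
  · exact hq.mem_conv_I_or_mem_conv_O ha hb hax hxb
  · exact absurd (hax.trans hxb) (lt_of_mem_I_of_mem_O hG h1 hb ha).not_ge
  · exact .inr ⟨a, ha, b, hb, hax, hxb⟩

lemma U2_of_U1_Q2 (hG : G.Acyclic) (h1 : G.U1) (hq : G.Q2) : G.U2 :=
  fun v => ⟨conv_I_inter_conv_O_eq_empty hG h1 v, conv_Ev_eq_union hG h1 hq v⟩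

lemma Q2_of_U2_U3 (h2 : G.U2) (h3 : G.U3) : G.Q2 := by
  obtain ⟨hin, hout⟩ := U3_iff_hullsSaturated.1 h3
  intro e₁ e e₂ h₁ h₂
  refine ⟨hin.fiber_subset_conv h₁.le h₂.le, hout.fiber_subset_conv h₁.le h₂.le, fun h => ?_⟩
  have he : e ∈ conv (G.Ev (G.t e₁)) := ⟨e₁, .inl rfl, e₂, .inr h.symm, h₁.le, h₂.le⟩
  rw [(h2 _).2] at he
  rcases he with he | he
  · exact .inl (hin _ e he)
  · rw [h] at he
    exact .inr (hout _ e he)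

end Digraph'

open Digraph' in
theorem U_iff_Q_general {V E : Type} [LinearOrder E]
    (G : Digraph' V E) (hG : G.Acyclic) :
    (G.U1 ∧ G.U2 ∧ G.U3) ↔ (G.U1 ∧ G.Q2) :=
  ⟨fun ⟨h1, h2, h3⟩ => ⟨h1, Q2_of_U2_U3 h2 h3⟩,
    fun ⟨h1, hq⟩ => ⟨h1, U2_of_U1_Q2 hG h1 hq,
      U3_iff_hullsSaturated.2 ⟨hq.hullsSaturated_t, hq.hullsSaturated_s⟩⟩⟩

open Digraph' in
/-- A linear order on the edges of a finite acyclic directed graph satisfies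
(U₁), (U₂), (U₃) iff it satisfies (Q₁) = (U₁) and the nesting condition (Q₂). -/
theorem U_iff_Q {V E : Type} [Fintype V] [Fintype E] [LinearOrder E]
    (G : Digraph' V E) (hG : G.Acyclic) :
    (G.U1 ∧ G.U2 ∧ G.U3) ↔ (G.U1 ∧ G.Q2) :=
  U_iff_Q_general G hG
end

section
/- The composed linear order ≺ = ≺₂ ∘ ≺₁ on E(G₂ ∘ G₁) satisfies condition (Q₁): if e₁ → e₂ in the reachable order of G₂ ∘ G₁, then e₁ ≺ e₂. -/
/-- A progressive graph: a directed (multi)graph with sources `s`, targets `t`, and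
a distinguished boundary set `σ` of vertices. -/
structure PGraph where
  V : Type
  E : Type
  s : E → V
  t : E → V
  σ : Set V

namespace PGraph

variable (G : PGraph)

/-- One edge can be followed by another. -/
def step (e f : G.E) : Prop := G.t e = G.s f

/-- The reachable order: a directed path starts with `e₁` and ends with `e₂`. -/
def reach : G.E → G.E → Prop := Relation.ReflTransGen G.step

/-- No directed cycles. -/
def Acyclic : Prop := ∀ e, ¬ Relation.TransGen G.step e e

/-- Incoming edges of a vertex. -/
def I (v : G.V) : Set G.E := {e | G.t e = v}

/-- Outgoing edges of a vertex. -/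
def O (v : G.V) : Set G.E := {e | G.s e = v}

/-- An input edge: it starts at a boundary vertex. -/
def InputEdge (e : G.E) : Prop := G.s e ∈ G.σ

/-- An output edge: it ends at a boundary vertex. -/
def OutputEdge (e : G.E) : Prop := G.t e ∈ G.σ

/-- An inner vertex. -/
def Inner (v : G.V) : Prop := v ∉ G.σ

/-- An input vertex: a boundary vertex which is a source. -/
def InputVertex (v : G.V) : Prop := v ∈ G.σ ∧ ∃ e, G.s e = v

/-- An output vertex: a boundary vertex which is a sink. -/
def OutputVertex (v : G.V) : Prop := v ∈ G.σ ∧ ∃ e, G.t e = v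

/-- The boundary consists of leaves: every boundary vertex has exactly one
incident edge-end. -/
def Progressive : Prop := ∀ v ∈ G.σ, ∃! e : G.E, G.s e = v ∨ G.t e = v

/-- The reflexive closure of a strict order on edges. -/
def le (lt : G.E → G.E → Prop) (a b : G.E) : Prop := lt a b ∨ a = b

/-- The convex hull of a set of edges with respect to a linear order `lt`. -/
def conv (lt : G.E → G.E → Prop) (X : Set G.E) : Set G.E :=
  {y | ∃ a ∈ X, ∃ b ∈ X, G.le lt a y ∧ G.le lt y b}

/-- (Q₁): the reachable order implies the linear order. -/
def Q1 (lt : G.E → G.E → Prop) : Prop :=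
  ∀ e₁ e₂, G.reach e₁ e₂ → G.le lt e₁ e₂

/-- (Q₂), the nesting condition. -/
def Q2 (lt : G.E → G.E → Prop) : Prop :=
  ∀ e₁ e e₂ : G.E, lt e₁ e → lt e e₂ →
    (G.t e₁ = G.t e₂ → G.I (G.t e) ⊆ G.conv lt (G.I (G.t e₁))) ∧
    (G.s e₁ = G.s e₂ → G.O (G.s e) ⊆ G.conv lt (G.O (G.s e₁))) ∧
    (G.t e₁ = G.s e₂ →
      G.I (G.t e) ⊆ G.conv lt (G.I (G.t e₁)) ∨ G.O (G.s e) ⊆ G.conv lt (G.O (G.s e₂)))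

/-- An upward planar order: a linear (strict total) order on edges satisfying
(Q₁) and the nesting condition (Q₂). -/
def UPO (lt : G.E → G.E → Prop) : Prop :=
  IsStrictTotalOrder G.E lt ∧ G.Q1 lt ∧ G.Q2 lt

/-- Admissibility: for every inner vertex `v`, input edges avoid `conv (O v)` and
output edges avoid `conv (I v)`. -/
def Admissible (lt : G.E → G.E → Prop) : Prop :=
  ∀ v : G.V, G.Inner v →
    (∀ e, G.InputEdge e → e ∉ G.conv lt (G.O v)) ∧
    (∀ e, G.OutputEdge e → e ∉ G.conv lt (G.I v))

end PGraph

/-- Data exhibiting `G` as the composite `G₂ ∘ G₁` of two progressive graphs: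
the edges of `G₁` and `G₂` embed into those of `G` via `j₁`, `j₂`, overlapping
exactly on the output edges of `G₁`, identified with the input edges of `G₂`;
the removed boundary vertices are the output vertices of `G₁` and the input
vertices of `G₂`, and the boundary of `G` is the union of the input vertices of
`G₁` and the output vertices of `G₂`. -/
structure CompData (G₁ G₂ G : PGraph) where
  j₁ : G₁.E → G.E
  j₂ : G₂.E → G.E
  k₁ : G₁.V → G.V
  k₂ : G₂.V → G.V
  inj₁ : Function.Injective j₁
  inj₂ : Function.Injective j₂
  coverE : ∀ e : G.E, (∃ a, j₁ a = e) ∨ (∃ b, j₂ b = e)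
  glue : ∀ a b, j₁ a = j₂ b → G₁.OutputEdge a ∧ G₂.InputEdge b
  glueOut : ∀ a, G₁.OutputEdge a → ∃ b, G₂.InputEdge b ∧ j₁ a = j₂ b
  glueIn : ∀ b, G₂.InputEdge b → ∃ a, G₁.OutputEdge a ∧ j₁ a = j₂ b
  src₁ : ∀ a, G.s (j₁ a) = k₁ (G₁.s a)
  tgt₁ : ∀ a, ¬ G₁.OutputEdge a → G.t (j₁ a) = k₁ (G₁.t a)
  tgt₂ : ∀ b, G.t (j₂ b) = k₂ (G₂.t b)
  src₂ : ∀ b, ¬ G₂.InputEdge b → G.s (j₂ b) = k₂ (G₂.s b)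
  injV₁ : ∀ v w, ¬ G₁.OutputVertex v → ¬ G₁.OutputVertex w → k₁ v = k₁ w → v = w
  injV₂ : ∀ v w, ¬ G₂.InputVertex v → ¬ G₂.InputVertex w → k₂ v = k₂ w → v = w
  disjV : ∀ v w, ¬ G₁.OutputVertex v → ¬ G₂.InputVertex w → k₁ v ≠ k₂ w
  coverV : ∀ u : G.V,
    (∃ v, ¬ G₁.OutputVertex v ∧ k₁ v = u) ∨ (∃ w, ¬ G₂.InputVertex w ∧ k₂ w = u)
  bdry : ∀ u : G.V,
    u ∈ G.σ ↔ (∃ v, G₁.InputVertex v ∧ k₁ v = u) ∨ (∃ w, G₂.OutputVertex w ∧ k₂ w = u)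

/-- `lt` is the shuffle-style composed linear order `lt₂ ∘ lt₁` on the edges of the
composite: it restricts to `lt₁` on `E(G₁)` and to `lt₂` on `E(G₂)`, and an
unidentified edge of `G₁` precedes an unidentified edge of `G₂` iff some identified
edge `ē = j₁ o = j₂ i` lies weakly between them. -/
def IsCompOrder {G₁ G₂ G : PGraph} (C : CompData G₁ G₂ G)
    (lt₁ : G₁.E → G₁.E → Prop) (lt₂ : G₂.E → G₂.E → Prop)
    (lt : G.E → G.E → Prop) : Prop :=
  (∀ a a', lt₁ a a' ↔ lt (C.j₁ a) (C.j₁ a')) ∧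
  (∀ b b', lt₂ b b' ↔ lt (C.j₂ b) (C.j₂ b')) ∧
  (∀ a b, (∀ b', C.j₁ a ≠ C.j₂ b') → (∀ a', C.j₂ b ≠ C.j₁ a') →
    (lt (C.j₁ a) (C.j₂ b) ↔
      ∃ o i, C.j₁ o = C.j₂ i ∧ G₁.le lt₁ a o ∧ G₂.le lt₂ i b))

/-!
Every edge of `G₂ ∘ G₁` comes from `G₁` or from `G₂`, and a single step `e → f` of the composite
is a step inside `G₁` or inside `G₂`: the glued edges are the only ones shared, and a step
from `G₂` back into `G₁` would have to pass through an output vertex of `G₁` or an input vertex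
of `G₂`, which in a progressive acyclic graph are never sources resp. targets. Since `≺` extends
`≺₁` and `≺₂`, (Q₁) of the factors makes every step increasing, and transitivity extends this
to paths.
-/

namespace PGraph

variable {G : PGraph}

theorem Q1_of_step {lt : G.E → G.E → Prop} [IsTrans G.E lt]
    (h : ∀ e f, G.step e f → G.le lt e f) : G.Q1 lt := by
  intro e₁ e₂ hreach
  induction hreach with
  | refl => exact Or.inr rfl
  | tail _ hstep ih =>
    rcases ih with h₁ | rfl
    · rcases h _ _ hstep with h₂ | rfl
      · exact Or.inl (_root_.trans h₁ h₂)
      · exact Or.inl h₁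
    · exact h _ _ hstep

theorem le.map {G' : PGraph} {lt : G.E → G.E → Prop} {lt' : G'.E → G'.E → Prop}
    {j : G.E → G'.E} (hj : ∀ a b, lt a b → lt' (j a) (j b)) {a b : G.E}
    (h : G.le lt a b) : G'.le lt' (j a) (j b) := by
  rcases h with h | rfl
  · exact Or.inl (hj a b h)
  · exact Or.inr rfl

theorem step_le_of_Q1 {lt : G.E → G.E → Prop} (hQ : G.Q1 lt) {e f : G.E} (h : G.step e f) :
    G.le lt e f :=
  hQ e f (Relation.ReflTransGen.single h)

/-- A boundary leaf that is the source of an edge cannot also be its target, else that edge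
would be a loop. -/
theorem not_outputVertex_s (hP : G.Progressive) (hA : G.Acyclic) (a : G.E) :
    ¬ G.OutputVertex (G.s a) := by
  rintro ⟨hσ, e, he⟩
  obtain ⟨u, -, huniq⟩ := hP _ hσ
  obtain rfl : a = e := (huniq a (Or.inl rfl)).trans (huniq e (Or.inr he)).symm
  exact hA a (Relation.TransGen.single he)

theorem not_inputVertex_t (hP : G.Progressive) (hA : G.Acyclic) (b : G.E) :
    ¬ G.InputVertex (G.t b) := by
  rintro ⟨hσ, e, he⟩
  obtain ⟨u, -, huniq⟩ := hP _ hσ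
  obtain rfl : b = e := (huniq b (Or.inr rfl)).trans (huniq e (Or.inl he)).symm
  exact hA b (Relation.TransGen.single he.symm)

end PGraph

namespace CompData

variable {G₁ G₂ G : PGraph} (C : CompData G₁ G₂ G)

theorem exists_j₁_not_outputEdge_or_j₂ (e : G.E) :
    (∃ a, ¬ G₁.OutputEdge a ∧ C.j₁ a = e) ∨ ∃ b, C.j₂ b = e := by
  rcases C.coverE e with ⟨a, rfl⟩ | hb
  · by_cases h : G₁.OutputEdge a
    · obtain ⟨b, -, hab⟩ := C.glueOut a h
      exact Or.inr ⟨b, hab.symm⟩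
    · exact Or.inl ⟨a, h, rfl⟩
  · exact Or.inr hb

theorem exists_j₁_or_j₂_not_inputEdge (f : G.E) :
    (∃ a, C.j₁ a = f) ∨ ∃ b, ¬ G₂.InputEdge b ∧ C.j₂ b = f := by
  rcases C.coverE f with ha | ⟨b, rfl⟩
  · exact Or.inl ha
  · by_cases h : G₂.InputEdge b
    · obtain ⟨a, -, hab⟩ := C.glueIn b h
      exact Or.inl ⟨a, hab⟩
    · exact Or.inr ⟨b, h, rfl⟩

theorem step_j₁_j₁ (hP₁ : G₁.Progressive) (hA₁ : G₁.Acyclic) {a a' : G₁.E}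
    (ha : ¬ G₁.OutputEdge a) (h : G.step (C.j₁ a) (C.j₁ a')) : G₁.step a a' := by
  refine C.injV₁ _ _ (fun hv => ha hv.1) (PGraph.not_outputVertex_s hP₁ hA₁ a') ?_
  rw [← C.tgt₁ a ha, ← C.src₁ a']
  exact h

theorem step_j₂_j₂ (hP₂ : G₂.Progressive) (hA₂ : G₂.Acyclic) {b b' : G₂.E}
    (hb' : ¬ G₂.InputEdge b') (h : G.step (C.j₂ b) (C.j₂ b')) : G₂.step b b' := by
  refine C.injV₂ _ _ (PGraph.not_inputVertex_t hP₂ hA₂ b) (fun hv => hb' hv.1) ?_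
  rw [← C.tgt₂ b, ← C.src₂ b' hb']
  exact h

theorem not_step_j₁_j₂ {a : G₁.E} {b : G₂.E} (ha : ¬ G₁.OutputEdge a)
    (hb : ¬ G₂.InputEdge b) : ¬ G.step (C.j₁ a) (C.j₂ b) := by
  intro h
  refine C.disjV _ _ (fun hv => ha hv.1) (fun hv => hb hv.1) ?_
  rw [← C.tgt₁ a ha, ← C.src₂ b hb]
  exact h

theorem not_step_j₂_j₁ (hP₁ : G₁.Progressive) (hA₁ : G₁.Acyclic) (hP₂ : G₂.Progressive)
    (hA₂ : G₂.Acyclic) (a : G₁.E) (b : G₂.E) : ¬ G.step (C.j₂ b) (C.j₁ a) := by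
  intro h
  refine C.disjV _ _ (PGraph.not_outputVertex_s hP₁ hA₁ a)
    (PGraph.not_inputVertex_t hP₂ hA₂ b) ?_
  rw [← C.src₁ a, ← C.tgt₂ b]
  exact h.symm

theorem step_cases (hP₁ : G₁.Progressive) (hA₁ : G₁.Acyclic) (hP₂ : G₂.Progressive)
    (hA₂ : G₂.Acyclic) {e f : G.E} (h : G.step e f) :
    (∃ a a', G₁.step a a' ∧ C.j₁ a = e ∧ C.j₁ a' = f) ∨
      ∃ b b', G₂.step b b' ∧ C.j₂ b = e ∧ C.j₂ b' = f := by
  rcases C.exists_j₁_not_outputEdge_or_j₂ e with ⟨a, ha, rfl⟩ | ⟨b, rfl⟩ <;>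
    rcases C.exists_j₁_or_j₂_not_inputEdge f with ⟨a', rfl⟩ | ⟨b', hb', rfl⟩
  · exact Or.inl ⟨a, a', C.step_j₁_j₁ hP₁ hA₁ ha h, rfl, rfl⟩
  · exact absurd h (C.not_step_j₁_j₂ ha hb')
  · exact absurd h (C.not_step_j₂_j₁ hP₁ hA₁ hP₂ hA₂ a' b)
  · exact Or.inr ⟨b, b', C.step_j₂_j₂ hP₂ hA₂ hb' h, rfl, rfl⟩

end CompData

theorem comp_Q1_general (G₁ G₂ G : PGraph)
    (lt₁ : G₁.E → G₁.E → Prop) (lt₂ : G₂.E → G₂.E → Prop) (lt : G.E → G.E → Prop)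
    (hP₁ : G₁.Progressive) (hA₁ : G₁.Acyclic) (hU₁ : G₁.UPO lt₁)
    (hP₂ : G₂.Progressive) (hA₂ : G₂.Acyclic) (hU₂ : G₂.UPO lt₂)
    (C : CompData G₁ G₂ G) (hst : IsStrictTotalOrder G.E lt)
    (hC : IsCompOrder C lt₁ lt₂ lt) :
    G.Q1 lt := by
  obtain ⟨hlt₁, hlt₂, -⟩ := hC
  refine PGraph.Q1_of_step fun e f hef => ?_
  rcases C.step_cases hP₁ hA₁ hP₂ hA₂ hef with ⟨a, a', h, rfl, rfl⟩ | ⟨b, b', h, rfl, rfl⟩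
  · exact (PGraph.step_le_of_Q1 hU₁.2.1 h).map fun a a' => (hlt₁ a a').mp
  · exact (PGraph.step_le_of_Q1 hU₂.2.1 h).map fun b b' => (hlt₂ b b').mp

/-- The composed linear order satisfies (Q₁): reachability in `G₂ ∘ G₁` implies
the composed order. -/
theorem comp_Q1 (G₁ G₂ G : PGraph)
    [Fintype G₁.E] [Fintype G₂.E] [Fintype G.E]
    (lt₁ : G₁.E → G₁.E → Prop) (lt₂ : G₂.E → G₂.E → Prop) (lt : G.E → G.E → Prop)
    (hP₁ : G₁.Progressive) (hA₁ : G₁.Acyclic) (hU₁ : G₁.UPO lt₁) (hAd₁ : G₁.Admissible lt₁)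
    (hP₂ : G₂.Progressive) (hA₂ : G₂.Acyclic) (hU₂ : G₂.UPO lt₂) (hAd₂ : G₂.Admissible lt₂)
    (C : CompData G₁ G₂ G) (hst : IsStrictTotalOrder G.E lt)
    (hC : IsCompOrder C lt₁ lt₂ lt) :
    G.Q1 lt :=
  comp_Q1_general G₁ G₂ G lt₁ lt₂ lt hP₁ hA₁ hU₁ hP₂ hA₂ hU₂ C hst hC
end
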